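/- arXiv:1103.0729 — 3 statements merged into one kernel-verified Lean document; each statement's English description precedes it below -/
import Mathlib

section
/- If γ is non-oscillating at O, then Hs(f)(x) ≠ 0 for all x on γ sufficiently close to O, and there exists a self-adjoint linear operator 𝓗 on ℝⁿ with operator norm ‖𝓗‖ = 1 such that Hs(f)(x)/‖Hs(f)(x)‖ → 𝓗 as x → O along γ. -/
/-!
Write `h(s)` for the Hessian of `f` at `γ s`. For every real-analytic `g`, the function `g ∘ Hs(f)`
is analytic near `O`, so by non-oscillation and the intermediate value theorem `g(h(s))` has
eventually constant sign. Applied to the coordinates of `h` in a basis, this shows first that `h`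
is eventually nonzero: otherwise `∇f ∘ γ` would be eventually constant, hence equal to its limit
`∇f(O) = 0`. Comparing squares of coordinates singles out a coordinate `x_m` that eventually
dominates all the others. Each ratio `x_k / |x_m|` is then bounded, and `x_k / |x_m| - c` has the
eventual sign of the linear function `x_k - c sign(x_m) x_m`, so its liminf and limsup coincide.
Hence `h / |x_m|` converges to a nonzero limit, and so does `h / ‖h‖`; the symmetry of the Hessian
passes to the limit.
-/

open scoped RealInnerProductSpace Topology
open Filter Set InnerProductSpace

lemma IsPreconnected.sign_eq_sign {X : Type*} [TopologicalSpace X] {s : Set X}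
    (hs : IsPreconnected s) {u : X → ℝ} (hu : ContinuousOn u s) (hne : ∀ x ∈ s, u x ≠ 0)
    {x y : X} (hx : x ∈ s) (hy : y ∈ s) : SignType.sign (u x) = SignType.sign (u y) := by
  by_contra hxy
  have h0 : (0 : ℝ) ∈ uIcc (u x) (u y) := by
    rcases (hne x hx).lt_or_gt with hx' | hx' <;> rcases (hne y hy).lt_or_gt with hy' | hy' <;>
      simp_all [mem_uIcc, le_of_lt, sign_pos, sign_neg]
  obtain ⟨z, hz, hz0⟩ := (hs.image u hu).ordConnected.uIcc_subset
    (mem_image_of_mem u hx) (mem_image_of_mem u hy) h0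
  exact hne z hz hz0

lemma eventuallyConst_sign_nhdsLT {u : ℝ → ℝ} {L : ℝ}
    (hcont : ∀ᶠ s in 𝓝[<] L, ContinuousAt u s)
    (hu : (∀ᶠ s in 𝓝[<] L, u s = 0) ∨ ∀ᶠ s in 𝓝[<] L, u s ≠ 0) :
    EventuallyConst (fun s => SignType.sign (u s)) (𝓝[<] L) := by
  rcases hu with hzero | hne
  · exact (EventuallyConst.const 0).congr (hzero.mono fun s hs => by simp [hs])
  obtain ⟨c, hcL, hc⟩ := mem_nhdsLT_iff_exists_Ioo_subset.1 (hcont.and hne)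
  obtain ⟨x, hx⟩ := nonempty_Ioo.2 (mem_Iio.1 hcL)
  refine eventuallyConst_iff_exists_eventuallyEq.2 ⟨SignType.sign (u x), ?_⟩
  filter_upwards [Ioo_mem_nhdsLT (mem_Iio.1 hcL)] with s hs
  exact isPreconnected_Ioo.sign_eq_sign (fun y hy => (hc hy).1.continuousWithinAt)
    (fun y hy => (hc hy).2) hs hx

lemma eventuallyConst_nhdsLT_of_hasDerivAt_zero {E : Type*} [NormedAddCommGroup E]
    [NormedSpace ℝ E] {u : ℝ → E} {L : ℝ} (hu : ∀ᶠ s in 𝓝[<] L, HasDerivAt u 0 s) :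
    EventuallyConst u (𝓝[<] L) := by
  obtain ⟨c, hcL, hc⟩ := mem_nhdsLT_iff_exists_Ioo_subset.1 hu
  obtain ⟨a, ha⟩ := isOpen_Ioo.exists_is_const_of_deriv_eq_zero isPreconnected_Ioo
    (fun s hs => (hc hs).differentiableAt.differentiableWithinAt) fun s hs => (hc hs).deriv
  exact eventuallyConst_iff_exists_eventuallyEq.2
    ⟨a, mem_of_superset (Ioo_mem_nhdsLT (mem_Iio.1 hcL)) ha⟩

section Filter

variable {α : Type*} {l : Filter α}

lemma Filter.EventuallyConst.eventually_nonpos_or_nonneg {v : α → ℝ}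
    (h : EventuallyConst (fun s => SignType.sign (v s)) l) :
    (∀ᶠ s in l, v s ≤ 0) ∨ ∀ᶠ s in l, 0 ≤ v s := by
  obtain ⟨σ, hσ⟩ := eventuallyConst_iff_exists_eventuallyEq.1 h
  rcases le_total σ 0 with hσ0 | hσ0
  · exact .inl (hσ.mono fun s hs => sign_nonpos_iff.1 (hs.trans_le hσ0))
  · exact .inr (hσ.mono fun s hs => sign_nonneg_iff.1 (hσ0.trans_eq hs.symm))

lemma exists_tendsto_of_eventuallyConst_sign_sub [l.NeBot] {w : α → ℝ}
    (hbdd : IsBoundedUnder (· ≤ ·) l fun s => |w s|)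
    (hsign : ∀ c : ℝ, EventuallyConst (fun s => SignType.sign (w s - c)) l) :
    ∃ a, Tendsto w l (𝓝 a) := by
  obtain ⟨hle, hge⟩ := isBoundedUnder_le_abs.1 hbdd
  refine ⟨liminf w l, tendsto_of_liminf_eq_limsup rfl ?_ hle hge⟩
  by_contra hne
  obtain ⟨c, hlow, hup⟩ := exists_between ((liminf_le_limsup hle hge).lt_of_ne (Ne.symm hne))
  have hlt : ∃ᶠ s in l, w s < c := frequently_lt_of_liminf_lt hle.isCoboundedUnder_ge hlow
  have hgt : ∃ᶠ s in l, c < w s := frequently_lt_of_lt_limsup hge.isCoboundedUnder_le hup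
  obtain ⟨σ, hσ⟩ := eventuallyConst_iff_exists_eventuallyEq.1 (hsign c)
  obtain ⟨s, hs, hσs⟩ := (hlt.and_eventually hσ).exists
  obtain ⟨t, ht, hσt⟩ := (hgt.and_eventually hσ).exists
  have h1 : SignType.sign (w s - c) = -1 := sign_neg (by linarith)
  have h2 : SignType.sign (w t - c) = 1 := sign_pos (by linarith)
  exact absurd ((h1.symm.trans hσs).trans (hσt.symm.trans h2)) (by decide)

lemma exists_eventually_forall_le {ι : Type*} [Finite ι] [Nonempty ι] {u : ι → α → ℝ}
    (htotal : ∀ j k, (∀ᶠ s in l, u j s ≤ u k s) ∨ ∀ᶠ s in l, u k s ≤ u j s) :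
    ∃ m, ∀ᶠ s in l, ∀ k, u k s ≤ u m s := by
  let r : ι → ι → Prop := fun j k => ∀ᶠ s in l, u j s ≤ u k s
  have : IsTrans ι r := ⟨fun _ _ _ hij hjk => (hij.and hjk).mono fun _ h => h.1.trans h.2⟩
  have hdir : Directed r id := fun j k => (htotal j k).elim
    (fun h => ⟨k, h, .of_forall fun _ => le_rfl⟩) (fun h => ⟨j, .of_forall fun _ => le_rfl, h⟩)
  obtain ⟨m, hm⟩ := hdir.finite_le id
  exact ⟨m, eventually_all.2 hm⟩

lemma tendsto_inv_norm_smul_of_tendsto_inv_smul {E : Type*} [NormedAddCommGroup E]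
    [NormedSpace ℝ E] {h : α → E} {q : α → ℝ} {M : E} (hq : ∀ᶠ s in l, 0 < q s) (hM : M ≠ 0)
    (hlim : Tendsto (fun s => (q s)⁻¹ • h s) l (𝓝 M)) :
    Tendsto (fun s => ‖h s‖⁻¹ • h s) l (𝓝 (‖M‖⁻¹ • M)) := by
  refine ((hlim.norm.inv₀ (norm_ne_zero_iff.2 hM)).smul hlim).congr' ?_
  filter_upwards [hq] with s hs
  rw [norm_smul, Real.norm_of_nonneg (inv_nonneg.2 hs.le), smul_smul]
  congr 1
  field_simp

lemma LinearMap.IsSymmetric.of_tendsto {𝕜 E : Type*} [RCLike 𝕜] [NormedAddCommGroup E]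
    [InnerProductSpace 𝕜 E] [l.NeBot] {A : α → E →L[𝕜] E} {H : E →L[𝕜] E}
    (hA : ∀ᶠ s in l, (A s : E →ₗ[𝕜] E).IsSymmetric) (hlim : Tendsto A l (𝓝 H)) :
    (H : E →ₗ[𝕜] E).IsSymmetric := by
  have hclosed : IsClosed {B : E →L[𝕜] E | (B : E →ₗ[𝕜] E).IsSymmetric} := by
    simp only [LinearMap.IsSymmetric, ContinuousLinearMap.coe_coe, ofPred_forall]
    exact isClosed_iInter fun u => isClosed_iInter fun v => isClosed_eq (by fun_prop) (by fun_prop)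
  exact hclosed.mem_of_tendsto hlim hA

end Filter

lemma LinearMap.analyticOnNhd_of_finiteDimensional {V W : Type*} [NormedAddCommGroup V]
    [NormedSpace ℝ V] [FiniteDimensional ℝ V] [NormedAddCommGroup W] [NormedSpace ℝ W]
    (φ : V →ₗ[ℝ] W) (s : Set V) : AnalyticOnNhd ℝ φ s :=
  (LinearMap.toContinuousLinearMap φ).analyticOnNhd s

/-- Unlike non-oscillation at `O`, this asks for the sign, not only the vanishing, of `g ∘ h` to be
eventually constant; along a continuous curve the two agree (`eventuallyConst_sign_nhdsLT`). -/
def NonOscillating {α V : Type*} [NormedAddCommGroup V] [NormedSpace ℝ V] (l : Filter α)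
    (h : α → V) : Prop :=
  ∀ g : V → ℝ, AnalyticOnNhd ℝ g univ → EventuallyConst (fun s => SignType.sign (g (h s))) l

namespace NonOscillating

variable {α V : Type*} [NormedAddCommGroup V] [NormedSpace ℝ V] [FiniteDimensional ℝ V]
  {l : Filter α} {h : α → V}

lemma eventually_eq_zero_or_eventually_ne_zero (hosc : NonOscillating l h) :
    (∀ᶠ s in l, h s = 0) ∨ ∀ᶠ s in l, h s ≠ 0 := by
  let b := Module.finBasis ℝ V
  by_cases hzero : ∀ k, ∀ᶠ s in l, b.coord k (h s) = 0
  · exact .inl ((eventually_all.2 hzero).mono fun s hs => b.forall_coord_eq_zero_iff.1 hs)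
  obtain ⟨k, hk⟩ := not_forall.1 hzero
  obtain ⟨σ, hσ⟩ := eventuallyConst_iff_exists_eventuallyEq.1
    (hosc _ ((b.coord k).analyticOnNhd_of_finiteDimensional univ))
  have hσ0 : σ ≠ 0 := by
    rintro rfl
    exact hk (hσ.mono fun s hs => sign_eq_zero_iff.1 hs)
  refine .inr (hσ.mono fun s hs h0 => hσ0 ?_)
  simp_all

lemma exists_eventually_abs_coord_le {ι : Type*} [Finite ι] [Nonempty ι]
    (hosc : NonOscillating l h) (b : Module.Basis ι ℝ V) :
    ∃ m, ∀ᶠ s in l, ∀ k, |b.coord k (h s)| ≤ |b.coord m (h s)| := by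
  have han (k : ι) := (b.coord k).analyticOnNhd_of_finiteDimensional univ
  refine exists_eventually_forall_le fun j k => ?_
  refine (hosc _ (((han j).pow 2).sub ((han k).pow 2)) |>.eventually_nonpos_or_nonneg).imp
    (Eventually.mono · fun s hs => ?_) (Eventually.mono · fun s hs => ?_)
  · simp only [Pi.sub_apply, Pi.pow_apply, sub_nonpos] at hs
    exact sq_le_sq.1 hs
  · simp only [Pi.sub_apply, Pi.pow_apply, sub_nonneg] at hs
    exact sq_le_sq.1 hs

lemma exists_tendsto_inv_smul [l.NeBot] (hosc : NonOscillating l h)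
    (hne : ∀ᶠ s in l, h s ≠ 0) :
    ∃ q : α → ℝ, ∃ M : V, M ≠ 0 ∧ (∀ᶠ s in l, 0 < q s) ∧
      Tendsto (fun s => (q s)⁻¹ • h s) l (𝓝 M) := by
  obtain ⟨s₀, hs₀⟩ := hne.exists
  have : Nontrivial V := ⟨⟨h s₀, 0, hs₀⟩⟩
  let b := Module.finBasis ℝ V
  have : Nonempty (Fin (Module.finrank ℝ V)) := b.index_nonempty
  have han (φ : V →ₗ[ℝ] ℝ) : AnalyticOnNhd ℝ φ univ := φ.analyticOnNhd_of_finiteDimensional univ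
  obtain ⟨m, hm⟩ := hosc.exists_eventually_abs_coord_le b
  obtain ⟨σ, hσ⟩ := eventuallyConst_iff_exists_eventuallyEq.1 (hosc _ (han (b.coord m)))
  have hq : ∀ᶠ s in l, 0 < |b.coord m (h s)| := by
    have hσ0 : σ ≠ 0 := by
      rintro rfl
      obtain ⟨s, hσs, hms, hs⟩ := (hσ.and (hm.and hne)).exists
      have hm0 : b.coord m (h s) = 0 := sign_eq_zero_iff.1 hσs
      exact hs (b.forall_coord_eq_zero_iff.1 fun k => abs_nonpos_iff.1 (by simpa [hm0] using hms k))
    filter_upwards [hσ] with s hs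
    exact abs_pos.2 fun h0 => hσ0 (by simp_all)
  have hratio k : ∃ c, Tendsto (fun s => b.coord k (h s) / |b.coord m (h s)|) l (𝓝 c) := by
    refine exists_tendsto_of_eventuallyConst_sign_sub ?_ fun c => ?_
    · refine isBoundedUnder_of_eventually_le (a := 1) ?_
      filter_upwards [hm, hq] with s hms hqs
      rw [abs_div, abs_abs]
      exact div_le_one_of_le₀ (hms k) hqs.le
    · refine (hosc _ (han (b.coord k - (c * σ) • b.coord m))).congr ?_
      filter_upwards [hσ, hq] with s hσs hqs
      have habs : |b.coord m (h s)| = σ * b.coord m (h s) := by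
        rw [← hσs, sign_mul_self]
      simp only [LinearMap.sub_apply, LinearMap.smul_apply, smul_eq_mul]
      rw [div_sub' hqs.ne', div_eq_mul_inv, sign_mul, sign_pos (inv_pos.2 hqs), mul_one, habs]
      ring_nf
  choose c hc using hratio
  refine ⟨fun s => |b.coord m (h s)|, b.equivFunL.symm c, ?_, hq, ?_⟩
  · have hcm : |c m| = 1 := by
      refine tendsto_nhds_unique (hc m).abs (tendsto_const_nhds.congr' ?_)
      filter_upwards [hq] with s hs
      rw [abs_div, abs_abs, div_self hs.ne']
    intro hM
    have : c = 0 := by simpa using congrArg b.equivFunL hM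
    simp [this] at hcm
  · refine ((b.equivFunL.symm.continuous.tendsto c).comp (tendsto_pi_nhds.2 hc)).congr' ?_
    filter_upwards with s
    rw [Function.comp_apply, ContinuousLinearEquiv.symm_apply_eq]
    ext k
    simp [div_eq_inv_mul]

lemma exists_tendsto_inv_norm_smul [l.NeBot] (hosc : NonOscillating l h)
    (hne : ∀ᶠ s in l, h s ≠ 0) :
    ∃ H : V, ‖H‖ = 1 ∧ Tendsto (fun s => ‖h s‖⁻¹ • h s) l (𝓝 H) := by
  obtain ⟨q, M, hM, hq, hlim⟩ := hosc.exists_tendsto_inv_smul hne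
  exact ⟨‖M‖⁻¹ • M, norm_smul_inv_norm hM, tendsto_inv_norm_smul_of_tendsto_inv_smul hq hM hlim⟩

end NonOscillating

section Gradient

variable {E : Type*} [NormedAddCommGroup E] [InnerProductSpace ℝ E] [CompleteSpace E]
  {f : E → ℝ}

lemma gradient_eq_toDual_symm_comp_fderiv : gradient f =
    ((toDual ℝ E).symm.toLinearIsometry.toContinuousLinearMap : StrongDual ℝ E →L[ℝ] E) ∘
      fderiv ℝ f :=
  rfl

lemma AnalyticOnNhd.gradient {s : Set E} (hf : AnalyticOnNhd ℝ f s) :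
    AnalyticOnNhd ℝ (gradient f) s := by
  rw [gradient_eq_toDual_symm_comp_fderiv]
  exact ContinuousLinearMap.comp_analyticOnNhd _ hf.fderiv

lemma ContDiffAt.isSymmetric_fderiv_gradient {x : E} (hf : ContDiffAt ℝ 2 f x) :
    (fderiv ℝ (gradient f) x : E →ₗ[ℝ] E).IsSymmetric := by
  have hdiff : DifferentiableAt ℝ (fderiv ℝ f) x :=
    (hf.fderiv_right (m := 1) le_rfl).differentiableAt one_ne_zero
  have hinner u v : ⟪fderiv ℝ (gradient f) x u, v⟫ = fderiv ℝ (fderiv ℝ f) x u v := by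
    rw [gradient_eq_toDual_symm_comp_fderiv,
      ((ContinuousLinearMap.hasFDerivAt _).comp x hdiff.hasFDerivAt).fderiv]
    exact toDual_symm_apply
  intro u v
  simp only [ContinuousLinearMap.coe_coe]
  rw [hinner, real_inner_comm, hinner]
  exact hf.isSymmSndFDerivAt (by simp) u v

end Gradient

theorem normalized_hessian_converges_along_nonoscillating_trajectory_general
    {n : ℕ}
    (U : Set (EuclideanSpace ℝ (Fin n)))
    (hOU : (0 : EuclideanSpace ℝ (Fin n)) ∈ U)
    (f : EuclideanSpace ℝ (Fin n) → ℝ)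
    (hfan : AnalyticOnNhd ℝ f U) (hgf0 : gradient f 0 = 0)
    (L : ℝ) (hL : 0 < L)
    (γ : ℝ → EuclideanSpace ℝ (Fin n))
    (hγU : ∀ s ∈ Set.Ico (0 : ℝ) L, γ s ∈ U)
    (hγreg : ∀ s ∈ Set.Ico (0 : ℝ) L, gradient f (γ s) ≠ 0)
    (hγode : ∀ s ∈ Set.Ico (0 : ℝ) L,
      HasDerivAt γ (‖gradient f (γ s)‖⁻¹ • gradient f (γ s)) s)
    (hγlim : Tendsto γ (𝓝[<] L) (𝓝 0))
    (hosc : ∀ g : EuclideanSpace ℝ (Fin n) → ℝ, AnalyticAt ℝ g 0 →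
      (∀ᶠ s in 𝓝[<] L, g (γ s) = 0) ∨ (∀ᶠ s in 𝓝[<] L, g (γ s) ≠ 0))
    :
    (∀ᶠ s in 𝓝[<] L, fderiv ℝ (gradient f) (γ s) ≠ 0) ∧
    ∃ H : EuclideanSpace ℝ (Fin n) →L[ℝ] EuclideanSpace ℝ (Fin n),
      (∀ u v : EuclideanSpace ℝ (Fin n), ⟪H u, v⟫ = ⟪u, H v⟫) ∧ ‖H‖ = 1 ∧
      Tendsto (fun s => ‖fderiv ℝ (gradient f) (γ s)‖⁻¹ • fderiv ℝ (gradient f) (γ s))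
        (𝓝[<] L) (𝓝 H) := by
  have hIco : ∀ᶠ s in 𝓝[<] L, s ∈ Ico 0 L := Ico_mem_nhdsLT hL
  have hgrad : AnalyticOnNhd ℝ (gradient f) U := hfan.gradient
  have hhess : NonOscillating (𝓝[<] L) fun s => fderiv ℝ (gradient f) (γ s) := by
    intro g hg
    have hgH : AnalyticOnNhd ℝ (g ∘ fderiv ℝ (gradient f)) U :=
      hg.comp hgrad.fderiv (mapsTo_univ _ _)
    refine eventuallyConst_sign_nhdsLT ?_ (hosc _ (hgH 0 hOU))
    filter_upwards [hIco] with s hs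
    exact (hgH _ (hγU s hs)).continuousAt.comp (hγode s hs).continuousAt
  have hne : ∀ᶠ s in 𝓝[<] L, fderiv ℝ (gradient f) (γ s) ≠ 0 := by
    refine hhess.eventually_eq_zero_or_eventually_ne_zero.resolve_left fun hzero => ?_
    obtain ⟨a, ha⟩ := (eventuallyConst_nhdsLT_of_hasDerivAt_zero (u := gradient f ∘ γ) <| by
      filter_upwards [hIco, hzero] with s hs hs0
      simpa [hs0] using (hgrad _ (hγU s hs)).differentiableAt.hasFDerivAt.comp_hasDerivAt s
        (hγode s hs)).eventuallyEq_const
    have ha0 : a = 0 := tendsto_nhds_unique (tendsto_const_nhds.congr' ha.symm)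
      (by simpa [hgf0] using (hgrad 0 hOU).continuousAt.tendsto.comp hγlim)
    obtain ⟨s, hs, hsa⟩ := (hIco.and ha).exists
    exact hγreg s hs (ha0 ▸ hsa)
  obtain ⟨H, hH1, hlim⟩ := hhess.exists_tendsto_inv_norm_smul hne
  refine ⟨hne, H, LinearMap.IsSymmetric.of_tendsto ?_ hlim, hH1, hlim⟩
  filter_upwards [hIco] with s hs
  exact ((hfan _ (hγU s hs)).contDiffAt.isSymmetric_fderiv_gradient).smul (conj_trivial _)

/-- along a non-oscillating trajectory the Hessian is eventually nonzero and its
normalized direction converges to a self-adjoint operator of operator norm one. -/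
theorem normalized_hessian_converges_along_nonoscillating_trajectory
    {n : ℕ} (hn : 2 ≤ n)
    (U : Set (EuclideanSpace ℝ (Fin n))) (hUopen : IsOpen U)
    (hOU : (0 : EuclideanSpace ℝ (Fin n)) ∈ U)
    (f : EuclideanSpace ℝ (Fin n) → ℝ)
    (hfan : AnalyticOnNhd ℝ f U) (hf0 : f 0 = 0) (hgf0 : gradient f 0 = 0)
    (L : ℝ) (hL : 0 < L)
    (γ : ℝ → EuclideanSpace ℝ (Fin n))
    (hγU : ∀ s ∈ Set.Ico (0 : ℝ) L, γ s ∈ U)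
    (hγreg : ∀ s ∈ Set.Ico (0 : ℝ) L, gradient f (γ s) ≠ 0)
    (hγode : ∀ s ∈ Set.Ico (0 : ℝ) L,
      HasDerivAt γ (‖gradient f (γ s)‖⁻¹ • gradient f (γ s)) s)
    (hfneg : f (γ 0) < 0)
    (hfmono : StrictMonoOn (fun s => f (γ s)) (Set.Ico (0 : ℝ) L))
    (hγlim : Tendsto γ (𝓝[<] L) (𝓝 0))
    (hosc : ∀ g : EuclideanSpace ℝ (Fin n) → ℝ, AnalyticAt ℝ g 0 →
      (∀ᶠ s in 𝓝[<] L, g (γ s) = 0) ∨ (∀ᶠ s in 𝓝[<] L, g (γ s) ≠ 0))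
    :
    (∀ᶠ s in 𝓝[<] L, fderiv ℝ (gradient f) (γ s) ≠ 0) ∧
    ∃ H : EuclideanSpace ℝ (Fin n) →L[ℝ] EuclideanSpace ℝ (Fin n),
      (∀ u v : EuclideanSpace ℝ (Fin n), ⟪H u, v⟫ = ⟪u, H v⟫) ∧ ‖H‖ = 1 ∧
      Tendsto (fun s => ‖fderiv ℝ (gradient f) (γ s)‖⁻¹ • fderiv ℝ (gradient f) (γ s))
        (𝓝[<] L) (𝓝 H) :=
  normalized_hessian_converges_along_nonoscillating_trajectory_general U hOU f hfan hgf0 L hL γ hγU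
    hγreg hγode hγlim hosc
end

section
/- Let f be real analytic near O with leading homogeneous part f_p of degree p ≥ 2, let γ be a half-trajectory of the unit gradient field of f with f negative and increasing along γ and γ(s) → O, let ν be its limit of secants, and assume f_p(ν) ≠ 0. Then |x|^{2−p}·Hs(f)(x) → Hs(f_p)(ν) as x → O along γ, the operator Hs(f_p)(ν) is nonzero, and consequently Hs(f)(x)/‖Hs(f)(x)‖ → Hs(f_p)(ν)/‖Hs(f_p)(ν)‖ as x → O along γ, i.e. the normalized Hessian of f converges along γ to a positive multiple of Hs(f_p)(ν). -/
/-! Write `f = f_p + g`. Since `g` is analytic and `O(|x|^{p+1})`, the diagonals of its Taylor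
terms of degree `≤ p` vanish, hence `Hs(g)(x) = O(|x|^{p-1})` and `|x|^{2-p} Hs(g)(x) → 0` along
any curve tending to `O`. The Hessian of `f_p` is homogeneous of degree `p - 2`, so
`|x|^{2-p} Hs(f_p)(x) = Hs(f_p)(x/|x|) → Hs(f_p)(ν)` along the trajectory, which stays off `O`
because `∇f` vanishes there. By Euler's identity `⟪Hs(f_p)(ν) ν, ν⟫ = p (p - 1) f_p(ν) ≠ 0`,
and since the rescaling factor is positive the normalized Hessians converge as well. -/

open scoped RealInnerProductSpace Topology
open Filter Asymptotics InnerProductSpace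

section PowerSeries

variable {𝕜 E F : Type*} [NontriviallyNormedField 𝕜] [NormedAddCommGroup E] [NormedSpace 𝕜 E]
  [NormedAddCommGroup F] [NormedSpace 𝕜 F]

theorem isBigO_norm_pow_norm_pow_of_le {m n : ℕ} (h : m ≤ n) :
    (fun x : E => ‖x‖ ^ n) =O[𝓝 0] fun x => ‖x‖ ^ m := by
  rcases h.eq_or_lt with rfl | h
  · exact isBigO_refl _ _
  · exact (isLittleO_norm_pow_norm_pow h).isBigO

theorem HasFPowerSeriesAt.apply_eq_zero_of_isBigO {f : E → F}
    {q : FormalMultilinearSeries 𝕜 E F} (hf : HasFPowerSeriesAt f q 0) {m : ℕ}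
    (hO : f =O[𝓝 0] fun y => ‖y‖ ^ m) {j : ℕ} (hj : j < m) (y : E) :
    q j (fun _ => y) = 0 := by
  induction j using Nat.strong_induction_on generalizing y with
  | _ j ih =>
  have hpartialSum : q.partialSum (j + 1) = fun z => q j fun _ => z := by
    funext z
    rw [FormalMultilinearSeries.partialSum, Finset.sum_range_succ, Finset.sum_eq_zero, zero_add]
    intro i hi
    exact ih i (Finset.mem_range.mp hi) ((Finset.mem_range.mp hi).trans hj) z
  have htaylor := hf.isBigO_sub_partialSum_pow (j + 1)
  simp only [zero_add, hpartialSum] at htaylor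
  have hf' := hO.trans (isBigO_norm_pow_norm_pow_of_le (E := E) hj)
  exact ((hf'.sub htaylor).congr_left fun z => sub_sub_cancel _ _)
    |>.continuousMultilinearMap_apply_eq_zero y

namespace FormalMultilinearSeries

def vanishBelow (q : FormalMultilinearSeries 𝕜 E F) (m : ℕ) : FormalMultilinearSeries 𝕜 E F :=
  fun j => if j < m then 0 else q j

theorem radius_le_radius_vanishBelow (q : FormalMultilinearSeries 𝕜 E F) (m : ℕ) :
    q.radius ≤ (q.vanishBelow m).radius := by
  have hnorm (j : ℕ) : ‖q.vanishBelow m j‖ ≤ ‖q j‖ := by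
    unfold vanishBelow
    split_ifs <;> simp
  refine ENNReal.le_of_forall_nnreal_lt fun ρ hρ => ?_
  obtain ⟨C, -, hC⟩ := q.norm_mul_pow_le_of_lt_radius hρ
  exact le_radius_of_bound _ C fun j =>
    (mul_le_mul_of_nonneg_right (hnorm j) (by positivity)).trans (hC j)

theorem derivSeries_derivSeries_vanishBelow (q : FormalMultilinearSeries 𝕜 E F) {k j : ℕ}
    (hj : j < k) : (q.vanishBelow (k + 2)).derivSeries.derivSeries j = 0 :=
  derivSeries_eq_zero _ (derivSeries_eq_zero _ (if_pos (by omega)))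

end FormalMultilinearSeries

theorem HasFPowerSeriesOnBall.vanishBelow {f : E → F} {q : FormalMultilinearSeries 𝕜 E F}
    {x : E} {r : ENNReal} (hf : HasFPowerSeriesOnBall f q x r) {m : ℕ}
    (hq : ∀ j < m, ∀ y, q j (fun _ => y) = 0) :
    HasFPowerSeriesOnBall f (q.vanishBelow m) x r := by
  refine ⟨hf.r_le.trans (q.radius_le_radius_vanishBelow m), hf.r_pos,
    fun {y} hy => (hf.hasSum hy).congr_fun fun j => ?_⟩
  by_cases hj : j < m <;> simp [FormalMultilinearSeries.vanishBelow, hj, hq]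

theorem HasFPowerSeriesAt.isBigO_pow_of_eq_zero {f : E → F}
    {q : FormalMultilinearSeries 𝕜 E F} (hf : HasFPowerSeriesAt f q 0) {k : ℕ}
    (hq : ∀ j < k, q j = 0) : f =O[𝓝 0] fun y => ‖y‖ ^ k := by
  have hpartialSum (y : E) : q.partialSum k y = 0 :=
    Finset.sum_eq_zero fun j hj => by simp [hq j (Finset.mem_range.mp hj)]
  simpa [hpartialSum] using hf.isBigO_sub_partialSum_pow k

/-- The second derivative is read off the power series after discarding its terms of degree
`< k + 2`, whose diagonals vanish but which need not vanish themselves. -/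
theorem AnalyticAt.isBigO_fderiv_fderiv [CompleteSpace F] {g : E → F} (hg : AnalyticAt 𝕜 g 0)
    {k : ℕ} (hO : g =O[𝓝 0] fun y => ‖y‖ ^ (k + 2)) :
    (fun x => fderiv 𝕜 (fderiv 𝕜 g) x) =O[𝓝 0] fun x => ‖x‖ ^ k := by
  obtain ⟨q, r, hq⟩ := hg
  have hq' := hq.vanishBelow fun j hj => hq.hasFPowerSeriesAt.apply_eq_zero_of_isBigO hO hj
  exact hq'.fderiv.fderiv.hasFPowerSeriesAt.isBigO_pow_of_eq_zero
    fun j => q.derivSeries_derivSeries_vanishBelow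

end PowerSeries

section Gradient

/-- Over `ℝ` the Riesz map `(toDual ℝ H).symm` is linear, and `gradient g = riesz H ∘ fderiv ℝ g`
holds by definition. -/
noncomputable abbrev riesz (H : Type*) [NormedAddCommGroup H] [InnerProductSpace ℝ H]
    [CompleteSpace H] : StrongDual ℝ H ≃ₗᵢ[ℝ] H :=
  (toDual ℝ H).symm

variable {H : Type*} [NormedAddCommGroup H] [InnerProductSpace ℝ H] [CompleteSpace H]

theorem AnalyticAt.analyticAt_gradient {g : H → ℝ} {x : H} (hg : AnalyticAt ℝ g x) :
    AnalyticAt ℝ (gradient g) x :=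
  (riesz H).toContinuousLinearEquiv.toContinuousLinearMap.analyticAt _ |>.comp hg.fderiv

theorem fderiv_gradient (g : H → ℝ) (x : H) :
    fderiv ℝ (gradient g) x = (riesz H).toContinuousLinearEquiv.toContinuousLinearMap.comp
      (fderiv ℝ (fderiv ℝ g) x) :=
  (riesz H).comp_fderiv

theorem norm_fderiv_gradient (g : H → ℝ) (x : H) :
    ‖fderiv ℝ (gradient g) x‖ = ‖fderiv ℝ (fderiv ℝ g) x‖ := by
  rw [fderiv_gradient]
  exact (riesz H).toLinearIsometry.norm_toContinuousLinearMap_comp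

theorem fderiv_gradient_add {g h : H → ℝ} {x : H} (hg : AnalyticAt ℝ g x)
    (hh : AnalyticAt ℝ h x) :
    fderiv ℝ (gradient (g + h)) x = fderiv ℝ (gradient g) x + fderiv ℝ (gradient h) x := by
  have hsum : gradient (g + h) =ᶠ[𝓝 x] gradient g + gradient h := by
    filter_upwards [hg.eventually_analyticAt, hh.eventually_analyticAt] with y hgy hhy
    simp [gradient, fderiv_add hgy.differentiableAt hhy.differentiableAt]
  rw [hsum.fderiv_eq]
  exact fderiv_add hg.analyticAt_gradient.differentiableAt hh.analyticAt_gradient.differentiableAt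

theorem AnalyticAt.isBigO_fderiv_gradient {g : H → ℝ} (hg : AnalyticAt ℝ g 0) {k : ℕ}
    (hO : g =O[𝓝 0] fun y => ‖y‖ ^ (k + 2)) :
    (fun x => fderiv ℝ (gradient g) x) =O[𝓝 0] fun x => ‖x‖ ^ k := by
  refine IsBigO.of_norm_left ?_
  simp_rw [norm_fderiv_gradient]
  exact (hg.isBigO_fderiv_fderiv hO).norm_left (E' := H →L[ℝ] StrongDual ℝ H)

end Gradient

section Homogeneous

variable {𝕜 E G : Type*} [NontriviallyNormedField 𝕜] [NormedAddCommGroup E] [NormedSpace 𝕜 E]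
  [NormedAddCommGroup G] [NormedSpace 𝕜 G] {F : E → G} {k : ℕ}

theorem fderiv_smul_of_homogeneous {t : 𝕜} (ht : t ≠ 0) (hk : 1 ≤ k)
    (hF : ∀ y, F (t • y) = t ^ k • F y) (x : E) :
    fderiv 𝕜 F (t • x) = t ^ (k - 1) • fderiv 𝕜 F x := by
  have hchain := fderiv_comp_smul (f := F) (x := x) t
  rw [show (fun y => F (t • y)) = t ^ k • F from funext hF, fderiv_const_smul_field] at hchain
  obtain ⟨k, rfl⟩ := Nat.exists_eq_add_of_le' hk
  rw [pow_succ', mul_smul] at hchain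
  simpa using (smul_right_injective _ ht hchain).symm

theorem fderiv_apply_self_of_homogeneous {x : E}
    (hF : ∀ᶠ t in 𝓝 (1 : 𝕜), F (t • x) = t ^ k • F x) (hd : DifferentiableAt 𝕜 F x) :
    fderiv 𝕜 F x x = (k : 𝕜) • F x := by
  have hray : HasDerivAt (fun t : 𝕜 => F (t • x)) (fderiv 𝕜 F x x) 1 := by
    have hline : HasDerivAt (fun t : 𝕜 => t • x) x 1 := by
      simpa using (hasDerivAt_id (1 : 𝕜)).smul_const x
    exact hd.hasFDerivAt.comp_hasDerivAt_of_eq 1 hline (one_smul 𝕜 x).symm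
  have hpow : HasDerivAt (fun t : 𝕜 => t ^ k • F x) ((k : 𝕜) • F x) 1 := by
    simpa using (hasDerivAt_pow k (1 : 𝕜)).smul_const (F x)
  exact hray.unique (hpow.congr_of_eventuallyEq hF)

end Homogeneous

section HomogeneousHessian

variable {H : Type*} [NormedAddCommGroup H] [InnerProductSpace ℝ H] [CompleteSpace H]
  {fp : H → ℝ} {p : ℕ}

theorem gradient_smul_of_homogeneous (hhom : ∀ (t : ℝ) (x : H), fp (t • x) = t ^ p * fp x)
    (hp : 1 ≤ p) {t : ℝ} (ht : t ≠ 0) (x : H) :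
    gradient fp (t • x) = t ^ (p - 1) • gradient fp x := by
  simp only [gradient, fderiv_smul_of_homogeneous ht hp (hhom t) x, map_smul]

theorem fderiv_gradient_smul_of_homogeneous
    (hhom : ∀ (t : ℝ) (x : H), fp (t • x) = t ^ p * fp x) (hp : 2 ≤ p) {t : ℝ} (ht : t ≠ 0)
    (x : H) : fderiv ℝ (gradient fp) (t • x) = t ^ (p - 2) • fderiv ℝ (gradient fp) x := by
  rw [fderiv_smul_of_homogeneous ht (by omega)
    (gradient_smul_of_homogeneous hhom (by omega) ht), Nat.sub_sub]

theorem fderiv_gradient_ne_zero_of_homogeneous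
    (hhom : ∀ (t : ℝ) (x : H), fp (t • x) = t ^ p * fp x) (hp : 2 ≤ p) {ν : H}
    (hfp : AnalyticAt ℝ fp ν) (hν : fp ν ≠ 0) : fderiv ℝ (gradient fp) ν ≠ 0 := by
  intro hzero
  have hgradient : ((p - 1 : ℕ) : ℝ) • gradient fp ν = 0 := by
    rw [← fderiv_apply_self_of_homogeneous ((eventually_ne_nhds one_ne_zero).mono fun t ht =>
      gradient_smul_of_homogeneous hhom (by omega) ht ν) hfp.analyticAt_gradient.differentiableAt,
      hzero, zero_apply]
  have heuler := fderiv_apply_self_of_homogeneous (Eventually.of_forall fun t => hhom t ν)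
    hfp.differentiableAt
  rw [← inner_gradient_left, (smul_eq_zero.mp hgradient).resolve_left (by norm_cast; omega),
    inner_zero_left] at heuler
  exact hν ((smul_eq_zero.mp heuler.symm).resolve_left (by norm_cast; omega))

end HomogeneousHessian

theorem rpow_two_sub_mul_pow_sub {r : ℝ} (hr : 0 < r) {p k : ℕ} (hkp : k ≤ p) (hk : k ≤ 2) :
    r ^ ((2 : ℝ) - p) * r ^ (p - k) = r ^ (2 - k) := by
  rw [← Real.rpow_natCast, ← Real.rpow_natCast r (2 - k), ← Real.rpow_add hr]
  congr 1
  push_cast [Nat.cast_sub hkp, Nat.cast_sub hk]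
  ring

theorem fderiv_gradient_eq_rpow_smul_of_homogeneous {H : Type*} [NormedAddCommGroup H]
    [InnerProductSpace ℝ H] [CompleteSpace H] {fp : H → ℝ} {p : ℕ}
    (hhom : ∀ (t : ℝ) (x : H), fp (t • x) = t ^ p * fp x) (hp : 2 ≤ p) {x : H} (hx : x ≠ 0) :
    ‖x‖ ^ ((2 : ℝ) - p) • fderiv ℝ (gradient fp) x = fderiv ℝ (gradient fp) (‖x‖⁻¹ • x) := by
  have hnorm : ‖x‖ ≠ 0 := norm_ne_zero_iff.mpr hx
  have hscale := fderiv_gradient_smul_of_homogeneous hhom hp hnorm (‖x‖⁻¹ • x)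
  rw [smul_inv_smul₀ hnorm] at hscale
  rw [hscale, smul_smul, rpow_two_sub_mul_pow_sub (norm_pos_iff.mpr hx) hp le_rfl, Nat.sub_self,
    pow_zero, one_smul]

theorem tendsto_rpow_smul_of_isBigO {α E G : Type*} [NormedAddCommGroup E] [NormedSpace ℝ E]
    [NormedAddCommGroup G] [NormedSpace ℝ G] {A : E → G} {p : ℕ} (hp : 2 ≤ p)
    (hA : A =O[𝓝 0] fun y => ‖y‖ ^ (p - 1)) {l : Filter α} {x : α → E}
    (hx : Tendsto x l (𝓝 0)) (hx0 : ∀ᶠ s in l, x s ≠ 0) :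
    Tendsto (fun s => ‖x s‖ ^ ((2 : ℝ) - p) • A (x s)) l (𝓝 0) := by
  have hbound : (fun s => ‖x s‖ ^ ((2 : ℝ) - p) • A (x s)) =O[l] fun s => ‖x s‖ := by
    refine ((isBigO_refl (fun s => ‖x s‖ ^ ((2 : ℝ) - p)) l).smul
      (hA.comp_tendsto hx)).congr' EventuallyEq.rfl ?_
    filter_upwards [hx0] with s hs
    simpa using rpow_two_sub_mul_pow_sub (norm_pos_iff.mpr hs) (k := 1) (by omega) (by omega)
  exact hbound.trans_tendsto (tendsto_norm_zero.comp hx)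

theorem tendsto_rpow_smul_fderiv_gradient {α H : Type*} [NormedAddCommGroup H]
    [InnerProductSpace ℝ H] [CompleteSpace H] {f fp : H → ℝ} {p : ℕ} (hp : 2 ≤ p)
    (hf : AnalyticAt ℝ f 0) (hfp : ∀ x, AnalyticAt ℝ fp x)
    (hhom : ∀ (t : ℝ) (x : H), fp (t • x) = t ^ p * fp x)
    (hlead : (fun x => f x - fp x) =O[𝓝 0] fun x => ‖x‖ ^ (p + 1))
    {l : Filter α} {x : α → H} (hx : Tendsto x l (𝓝 0)) (hx0 : ∀ᶠ s in l, x s ≠ 0) {ν : H}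
    (hdir : Tendsto (fun s => ‖x s‖⁻¹ • x s) l (𝓝 ν)) :
    Tendsto (fun s => ‖x s‖ ^ ((2 : ℝ) - p) • fderiv ℝ (gradient f) (x s)) l
      (𝓝 (fderiv ℝ (gradient fp) ν)) := by
  have hremainder := tendsto_rpow_smul_of_isBigO hp ((hf.sub (hfp 0)).isBigO_fderiv_gradient
    (k := p - 1) (by rwa [show p - 1 + 2 = p + 1 by omega])) hx hx0
  have hleading : Tendsto (fun s => fderiv ℝ (gradient fp) (‖x s‖⁻¹ • x s)) l
      (𝓝 (fderiv ℝ (gradient fp) ν)) :=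
    (hfp ν).analyticAt_gradient.fderiv.continuousAt.tendsto.comp hdir
  rw [← zero_add (fderiv ℝ (gradient fp) ν)]
  refine (hremainder.add hleading).congr' ?_
  filter_upwards [hx.eventually hf.eventually_analyticAt, hx0] with s hfs hs
  rw [← fderiv_gradient_eq_rpow_smul_of_homogeneous hhom hp hs, ← smul_add,
    ← fderiv_gradient_add (hfs.sub (hfp _)) (hfp _), sub_add_cancel]

theorem Filter.Tendsto.inv_norm_smul_of_pos_smul {α G : Type*} [NormedAddCommGroup G]
    [NormedSpace ℝ G] {l : Filter α} {c : α → ℝ} {A : α → G} {T : G}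
    (h : Tendsto (fun s => c s • A s) l (𝓝 T)) (hT : T ≠ 0) (hc : ∀ᶠ s in l, 0 < c s) :
    Tendsto (fun s => ‖A s‖⁻¹ • A s) l (𝓝 (‖T‖⁻¹ • T)) := by
  have hcont : ContinuousAt (fun X : G => ‖X‖⁻¹ • X) T :=
    (continuous_norm.continuousAt.inv₀ (norm_ne_zero_iff.mpr hT)).smul continuousAt_id
  refine (hcont.tendsto.comp h).congr' ?_
  filter_upwards [hc] with s hs
  rw [Function.comp_apply, norm_smul, Real.norm_of_nonneg hs.le, smul_smul, mul_inv,
    mul_right_comm, inv_mul_cancel₀ hs.ne', one_mul]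

theorem rescaled_hessian_tendsto_leading_part_hessian_general
    {n : ℕ}
    (U : Set (EuclideanSpace ℝ (Fin n)))
    (hOU : (0 : EuclideanSpace ℝ (Fin n)) ∈ U)
    (f : EuclideanSpace ℝ (Fin n) → ℝ)
    (hfan : AnalyticOnNhd ℝ f U) (hgf0 : gradient f 0 = 0)
    (L : ℝ) (hL : 0 < L)
    (γ : ℝ → EuclideanSpace ℝ (Fin n))
    (hγreg : ∀ s ∈ Set.Ico (0 : ℝ) L, gradient f (γ s) ≠ 0)
    (hγlim : Tendsto γ (𝓝[<] L) (𝓝 0))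
    (p : ℕ) (hp : 2 ≤ p)
    (fp : EuclideanSpace ℝ (Fin n) → ℝ)
    (hfpan : AnalyticOnNhd ℝ fp Set.univ)
    (hfphom : ∀ (t : ℝ) (x : EuclideanSpace ℝ (Fin n)), fp (t • x) = t ^ p * fp x)
    (hlead : (fun x => f x - fp x) =O[𝓝 (0 : EuclideanSpace ℝ (Fin n))]
      fun x => ‖x‖ ^ (p + 1))
    (ν : EuclideanSpace ℝ (Fin n))
    (hνlim : Tendsto (fun s => ‖γ s‖⁻¹ • γ s) (𝓝[<] L) (𝓝 ν))
    (hfpν : fp ν ≠ 0) :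
    Tendsto (fun s => (‖γ s‖ ^ ((2 : ℝ) - (p : ℝ))) • fderiv ℝ (gradient f) (γ s))
      (𝓝[<] L) (𝓝 (fderiv ℝ (gradient fp) ν)) ∧
    fderiv ℝ (gradient fp) ν ≠ 0 ∧
    Tendsto (fun s => ‖fderiv ℝ (gradient f) (γ s)‖⁻¹ • fderiv ℝ (gradient f) (γ s))
      (𝓝[<] L) (𝓝 (‖fderiv ℝ (gradient fp) ν‖⁻¹ • fderiv ℝ (gradient fp) ν)) := by
  have hγ0 : ∀ᶠ s in 𝓝[<] L, γ s ≠ 0 := by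
    filter_upwards [Ioo_mem_nhdsLT hL] with s hs hγs
    exact hγreg s (Set.Ioo_subset_Ico_self hs) (by rw [hγs, hgf0])
  have hrescaled := tendsto_rpow_smul_fderiv_gradient hp (hfan 0 hOU) (fun x => hfpan x trivial)
    hfphom hlead hγlim hγ0 hνlim
  have hne := fderiv_gradient_ne_zero_of_homogeneous hfphom hp (hfpan ν trivial) hfpν
  exact ⟨hrescaled, hne, hrescaled.inv_norm_smul_of_pos_smul hne
    (hγ0.mono fun s hs => Real.rpow_pos_of_pos (norm_pos_iff.mpr hs) _)⟩

/-- if `f_p(ν) ≠ 0` then `|x|^{2-p}·Hs(f)(x) → Hs(f_p)(ν) ≠ 0` along the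
trajectory, and the normalized Hessian of `f` converges to the normalization of `Hs(f_p)(ν)`. -/
theorem rescaled_hessian_tendsto_leading_part_hessian
    {n : ℕ} (hn : 2 ≤ n)
    (U : Set (EuclideanSpace ℝ (Fin n))) (hUopen : IsOpen U)
    (hOU : (0 : EuclideanSpace ℝ (Fin n)) ∈ U)
    (f : EuclideanSpace ℝ (Fin n) → ℝ)
    (hfan : AnalyticOnNhd ℝ f U) (hf0 : f 0 = 0) (hgf0 : gradient f 0 = 0)
    (L : ℝ) (hL : 0 < L)
    (γ : ℝ → EuclideanSpace ℝ (Fin n))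
    (hγU : ∀ s ∈ Set.Ico (0 : ℝ) L, γ s ∈ U)
    (hγreg : ∀ s ∈ Set.Ico (0 : ℝ) L, gradient f (γ s) ≠ 0)
    (hγode : ∀ s ∈ Set.Ico (0 : ℝ) L,
      HasDerivAt γ (‖gradient f (γ s)‖⁻¹ • gradient f (γ s)) s)
    (hfneg : f (γ 0) < 0)
    (hfmono : StrictMonoOn (fun s => f (γ s)) (Set.Ico (0 : ℝ) L))
    (hγlim : Tendsto γ (𝓝[<] L) (𝓝 0))
    (p : ℕ) (hp : 2 ≤ p)
    (fp : EuclideanSpace ℝ (Fin n) → ℝ)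
    (hfpan : AnalyticOnNhd ℝ fp Set.univ)
    (hfphom : ∀ (t : ℝ) (x : EuclideanSpace ℝ (Fin n)), fp (t • x) = t ^ p * fp x)
    (hfpne : ∃ x, fp x ≠ 0)
    (hlead : (fun x => f x - fp x) =O[𝓝 (0 : EuclideanSpace ℝ (Fin n))]
      fun x => ‖x‖ ^ (p + 1))
    (ν : EuclideanSpace ℝ (Fin n)) (hν1 : ‖ν‖ = 1)
    (hνlim : Tendsto (fun s => ‖γ s‖⁻¹ • γ s) (𝓝[<] L) (𝓝 ν))
    (hfpν : fp ν ≠ 0) :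
    Tendsto (fun s => (‖γ s‖ ^ ((2 : ℝ) - (p : ℝ))) • fderiv ℝ (gradient f) (γ s))
      (𝓝[<] L) (𝓝 (fderiv ℝ (gradient fp) ν)) ∧
    fderiv ℝ (gradient fp) ν ≠ 0 ∧
    Tendsto (fun s => ‖fderiv ℝ (gradient f) (γ s)‖⁻¹ • fderiv ℝ (gradient f) (γ s))
      (𝓝[<] L) (𝓝 (‖fderiv ℝ (gradient fp) ν‖⁻¹ • fderiv ℝ (gradient fp) ν)) :=
  rescaled_hessian_tendsto_leading_part_hessian_general U hOU f hfan hgf0 L hL γ hγreg hγlim p hp fp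
    hfpan hfphom hlead ν hνlim hfpν
end

section
/- If γ is non-oscillating at O, then with m and β as in the Kurdyka–Mostowski–Parusiński expansion along γ, the gradient is asymptotically radial along γ: ∇f(x) = −mβ·|x|^{m−1}·(x/|x|) + o(|x|^{m−1}) as x → O along γ. -/
/-!
Along `γ` put `v = |∇f(γ)|`, `p = ⟨∇f(γ), γ/|γ|⟩` and `k = mβ|γ|^{m-1}`. Then `(f ∘ γ)' = v`,
`(β|γ|^m)' = k p / v`, and the expansions say `f(γ) ~ -β|γ|^m` and `p ~ -k`. If `a p² ≤ v²` held
near the end of `γ` for some `a > 1`, then `K f(γ) + β|γ|^m` would be nondecreasing for a suitable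
`K < 1`, hence `≤ 0` since it tends to `0`; this contradicts `f(γ) ~ -β|γ|^m`.
The function `a⟨∇f(x), x⟩² - |∇f(x)|²|x|²` is analytic, so by non-oscillation and the intermediate
value theorem it has eventually constant sign along `γ`: thus `v² < a p²` eventually, for every
`a > 1`. Finally `|∇f(γ) + k γ/|γ||² = (v² - p²) + (p + k)²`, and both terms are `o(k²)`.
-/

open scoped RealInnerProductSpace Topology Gradient
open Filter Set Asymptotics

theorem MonotoneOn.le_of_tendsto_nhdsLT {β : Type*} [Preorder β] [TopologicalSpace β]
    [ClosedIciTopology β] {φ : ℝ → β} {S : Set ℝ} {L x : ℝ} {y : β} (hφ : MonotoneOn φ S)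
    (hS : S ∈ 𝓝[<] L) (hlim : Tendsto φ (𝓝[<] L) (𝓝 y)) (hx : x ∈ S) (hxL : x < L) :
    φ x ≤ y :=
  ge_of_tendsto hlim <| by
    filter_upwards [hS, Ioo_mem_nhdsLT hxL] with t ht hxt using hφ hx ht hxt.1.le

theorem StrictMonoOn.lt_of_tendsto_nhdsLT {β : Type*} [Preorder β] [TopologicalSpace β]
    [ClosedIciTopology β] {φ : ℝ → β} {S : Set ℝ} {L x : ℝ} {y : β} (hφ : StrictMonoOn φ S)
    (hS : S ∈ 𝓝[<] L) (hlim : Tendsto φ (𝓝[<] L) (𝓝 y)) (hx : x ∈ S) (hxL : x < L) :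
    φ x < y := by
  obtain ⟨t, htS, hxt, htL⟩ := Filter.nonempty_of_mem (inter_mem hS (Ioo_mem_nhdsLT hxL))
  exact (hφ hx htS hxt).trans_le (hφ.monotoneOn.le_of_tendsto_nhdsLT hS hlim htS htL)

theorem eventually_le_of_tendsto_of_hasDerivAt_nonneg {G G' : ℝ → ℝ} {L y : ℝ}
    (hG : ∀ᶠ s in 𝓝[<] L, HasDerivAt G (G' s) s ∧ 0 ≤ G' s)
    (hlim : Tendsto G (𝓝[<] L) (𝓝 y)) : ∀ᶠ s in 𝓝[<] L, G s ≤ y := by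
  obtain ⟨b, hbL, hsub⟩ := mem_nhdsLT_iff_exists_Ioo_subset.1 hG
  have hmono : MonotoneOn G (Ioo b L) := by
    refine monotoneOn_of_hasDerivWithinAt_nonneg (f' := G') (convex_Ioo b L)
      (fun s hs => (hsub hs).1.continuousAt.continuousWithinAt) (fun s hs => ?_) (fun s hs => ?_)
    · rw [interior_Ioo] at hs
      exact (hsub hs).1.hasDerivWithinAt
    · rw [interior_Ioo] at hs
      exact (hsub hs).2
  filter_upwards [Ioo_mem_nhdsLT hbL] with s hs
  exact hmono.le_of_tendsto_nhdsLT (Ioo_mem_nhdsLT hbL) hlim hs hs.2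

theorem IsPreconnected.forall_pos_or_forall_neg {X : Type*} [TopologicalSpace X] {S : Set X}
    {h : X → ℝ} (hS : IsPreconnected S) (hc : ContinuousOn h S) (h0 : ∀ x ∈ S, h x ≠ 0) :
    (∀ x ∈ S, 0 < h x) ∨ ∀ x ∈ S, h x < 0 := by
  by_contra! ⟨⟨x, hx, hx0⟩, ⟨y, hy, hy0⟩⟩
  obtain ⟨z, hz, hz0⟩ := hS.intermediate_value hx hy hc ⟨hx0, hy0⟩
  exact h0 z hz hz0

theorem eventually_pos_of_not_eventually_nonpos {h : ℝ → ℝ} {L : ℝ}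
    (hosc : (∀ᶠ s in 𝓝[<] L, h s = 0) ∨ ∀ᶠ s in 𝓝[<] L, h s ≠ 0)
    (hc : ∀ᶠ s in 𝓝[<] L, ContinuousAt h s) (hnonpos : ¬ ∀ᶠ s in 𝓝[<] L, h s ≤ 0) :
    ∀ᶠ s in 𝓝[<] L, 0 < h s := by
  rcases hosc with hzero | hne
  · exact absurd (hzero.mono fun s hs => hs.le) hnonpos
  obtain ⟨b, hbL, hsub⟩ := mem_nhdsLT_iff_exists_Ioo_subset.1 (hne.and hc)
  rcases isPreconnected_Ioo.forall_pos_or_forall_neg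
    (fun s hs => (hsub hs).2.continuousWithinAt) (fun s hs => (hsub hs).1) with hpos | hneg
  · exact mem_of_superset (Ioo_mem_nhdsLT hbL) hpos
  · exact absurd (mem_of_superset (Ioo_mem_nhdsLT hbL) fun s hs => (hneg s hs).le) hnonpos

theorem Asymptotics.IsLittleO.eventually_abs_add_le {α : Type*} {l : Filter α} {p k : α → ℝ}
    (h : (fun x => p x + k x) =o[l] k) (hk : ∀ᶠ x in l, 0 ≤ k x) {δ : ℝ} (hδ : 0 < δ) :
    ∀ᶠ x in l, |p x + k x| ≤ δ * k x := by
  filter_upwards [h.def hδ, hk] with x hx hkx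
  rwa [Real.norm_eq_abs, Real.norm_eq_abs, abs_of_nonneg hkx] at hx

theorem not_eventually_mul_sq_le_sq {φ ψ v p k : ℝ → ℝ} {L a : ℝ} (ha : 1 < a)
    (hφ : ∀ᶠ s in 𝓝[<] L, HasDerivAt φ (v s) s)
    (hψ : ∀ᶠ s in 𝓝[<] L, HasDerivAt ψ (k s * (p s / v s)) s)
    (hv : ∀ᶠ s in 𝓝[<] L, 0 < v s) (hψ₀ : ∀ᶠ s in 𝓝[<] L, 0 < ψ s)
    (hk : ∀ᶠ s in 𝓝[<] L, 0 ≤ k s)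
    (hφlim : Tendsto φ (𝓝[<] L) (𝓝 0)) (hψlim : Tendsto ψ (𝓝[<] L) (𝓝 0))
    (hφψ : (fun s => φ s + ψ s) =o[𝓝[<] L] ψ) (hpk : (fun s => p s + k s) =o[𝓝[<] L] k) :
    ¬ ∀ᶠ s in 𝓝[<] L, a * p s ^ 2 ≤ v s ^ 2 := by
  intro hangle
  obtain ⟨δ, K, hδ, hδ1, hK, hKa, hKδ⟩ : ∃ δ K : ℝ,
      0 < δ ∧ δ < 1 ∧ 0 < K ∧ K * (a * (1 - δ)) = 1 ∧ K * (1 + δ) < 1 := by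
    refine ⟨(a - 1) / (2 * a), 2 / (a + 1), by positivity, ?_, by positivity, ?_, ?_⟩
    · rw [div_lt_one (by positivity)]; linarith
    · field_simp; ring
    · rw [div_mul_eq_mul_div, div_lt_one (by positivity)]
      field_simp
      nlinarith
  have hG : ∀ᶠ s in 𝓝[<] L, HasDerivAt (fun t => K * φ t + ψ t) (K * v s + k s * (p s / v s)) s
      ∧ 0 ≤ K * v s + k s * (p s / v s) := by
    filter_upwards [hφ, hψ, hv, hk, hangle, hpk.eventually_abs_add_le hk hδ]
      with s hφs hψs hvs hks hangle_s hpks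
    refine ⟨(hφs.const_mul K).add hψs, ?_⟩
    have hp : (1 - δ) * k s ≤ -p s := by linarith [abs_le.1 hpks]
    have hp₀ : 0 ≤ -p s := (mul_nonneg (by linarith) hks).trans hp
    have hkp : k s * -p s ≤ K * v s ^ 2 :=
      calc k s * -p s = K * (a * ((1 - δ) * k s * -p s)) := by
            linear_combination -(k s * -p s) * hKa
        _ ≤ K * (a * p s ^ 2) := by gcongr; nlinarith [mul_le_mul_of_nonneg_right hp hp₀]
        _ ≤ K * v s ^ 2 := by gcongr
    have hG' : K * v s + k s * (p s / v s) = (K * v s ^ 2 + k s * p s) / v s := by field_simp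
    rw [hG']
    exact div_nonneg (by linarith) hvs.le
  have hGle := eventually_le_of_tendsto_of_hasDerivAt_nonneg hG
    (by simpa using (hφlim.const_mul K).add hψlim)
  have hGpos : ∀ᶠ s in 𝓝[<] L, 0 < K * φ s + ψ s := by
    filter_upwards [hψ₀, hφψ.eventually_abs_add_le (hψ₀.mono fun s => le_of_lt) hδ]
      with s hψs hφψs
    nlinarith [abs_le.1 hφψs]
  obtain ⟨s, hle, hpos⟩ := (hGle.and hGpos).exists
  exact hle.not_gt hpos

section InnerProductSpace

variable {E : Type*} [NormedAddCommGroup E] [InnerProductSpace ℝ E]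

theorem AnalyticAt.inner {F : Type*} [NormedAddCommGroup F] [NormedSpace ℝ F] {a b : F → E}
    {x : F} (ha : AnalyticAt ℝ a x) (hb : AnalyticAt ℝ b x) :
    AnalyticAt ℝ (fun y => ⟪a y, b y⟫) x :=
  ((innerSL ℝ (E := E)).analyticAt_bilinear (a x, b x)).comp₂ ha hb

theorem norm_add_smul_sq_of_norm_eq_one {u : E} (hu : ‖u‖ = 1) (v : E) (t : ℝ) :
    ‖v + t • u‖ ^ 2 = (‖v‖ ^ 2 - ⟪v, u⟫ ^ 2) + (⟪v, u⟫ + t) ^ 2 := by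
  rw [norm_add_sq_real, inner_smul_right, norm_smul, hu, Real.norm_eq_abs, mul_one, sq_abs]
  ring

theorem inner_inv_norm_smul_self (v : E) : ⟪v, ‖v‖⁻¹ • v⟫ = ‖v‖ := by
  rcases eq_or_ne v 0 with rfl | hv
  · simp
  rw [inner_smul_right, real_inner_self_eq_norm_sq]
  field_simp

theorem HasDerivAt.norm {γ : ℝ → E} {w : E} {s : ℝ} (hγ : HasDerivAt γ w s) (h0 : γ s ≠ 0) :
    HasDerivAt (fun t => ‖γ t‖) ⟪w, ‖γ s‖⁻¹ • γ s⟫ s := by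
  have hsq := hγ.norm_sq.sqrt (by positivity)
  simp only [Real.sqrt_sq (norm_nonneg _)] at hsq
  convert hsq using 1
  rw [inner_smul_right, real_inner_comm]
  field_simp

theorem isLittleO_add_smul_of_forall_sq_le {α : Type*} {l : Filter α} {V u : α → E} {k : α → ℝ}
    (hu : ∀ᶠ x in l, ‖u x‖ = 1)
    (hangle : ∀ a, 1 < a → ∀ᶠ x in l, ‖V x‖ ^ 2 ≤ a * ⟪V x, u x⟫ ^ 2)
    (hk : (fun x => ⟪V x, u x⟫ + k x) =o[l] k) :
    (fun x => V x + k x • u x) =o[l] k := by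
  refine isLittleO_iff.2 fun c hc => ?_
  set δ := min 1 (c / 2)
  have hδ : 0 < δ := by positivity
  filter_upwards [hu, hangle (1 + c ^ 2 / 8) (lt_add_of_pos_right _ (by positivity)), hk.def hδ]
    with x hux hax hkx
  simp only [Real.norm_eq_abs] at hkx ⊢
  set p := ⟪V x, u x⟫
  have hp : |p| ≤ 2 * |k x| := by
    have := abs_sub (p + k x) (k x)
    rw [add_sub_cancel_right] at this
    linarith [mul_le_of_le_one_left (abs_nonneg (k x)) (min_le_left 1 (c / 2))]
  have hp2 : p ^ 2 ≤ 4 * k x ^ 2 := by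
    nlinarith [pow_le_pow_left₀ (abs_nonneg _) hp 2, sq_abs p, sq_abs (k x)]
  have hpk2 : (p + k x) ^ 2 ≤ c ^ 2 / 4 * k x ^ 2 := by
    have hδc : δ * |k x| ≤ c / 2 * |k x| := by gcongr; exact min_le_right 1 (c / 2)
    nlinarith [pow_le_pow_left₀ (abs_nonneg _) (hkx.trans hδc) 2, sq_abs (p + k x), sq_abs (k x)]
  have hsq : ‖V x + k x • u x‖ ^ 2 ≤ (c * |k x|) ^ 2 := by
    rw [norm_add_smul_sq_of_norm_eq_one hux, mul_pow, sq_abs]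
    nlinarith [mul_le_mul_of_nonneg_left hp2 (sq_nonneg c)]
  exact (sq_le_sq₀ (norm_nonneg _) (by positivity)).1 hsq

variable [CompleteSpace E]

theorem AnalyticAt.gradient {f : E → ℝ} {x : E} (hf : AnalyticAt ℝ f x) :
    AnalyticAt ℝ (∇ f) x :=
  ((InnerProductSpace.toDual ℝ E).symm.toContinuousLinearEquiv.toContinuousLinearMap.analyticAt
    _).comp hf.fderiv

theorem HasGradientAt.comp_hasDerivAt {f : E → ℝ} {γ : ℝ → E} {g w : E} {s : ℝ}
    (hf : HasGradientAt f g (γ s)) (hγ : HasDerivAt γ w s) :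
    HasDerivAt (fun t => f (γ t)) ⟪g, w⟫ s :=
  (hasGradientAt_iff_hasFDerivAt.1 hf).comp_hasDerivAt s hγ

noncomputable def gradientConeTest (f : E → ℝ) (a : ℝ) (x : E) : ℝ :=
  a * ⟪∇ f x, x⟫ ^ 2 - ‖∇ f x‖ ^ 2 * ‖x‖ ^ 2

theorem AnalyticAt.gradientConeTest {f : E → ℝ} {x : E}
    (hf : AnalyticAt ℝ f x) (a : ℝ) : AnalyticAt ℝ (gradientConeTest f a) x := by
  unfold _root_.gradientConeTest
  simp only [← real_inner_self_eq_norm_sq]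
  exact (analyticAt_const.mul ((hf.gradient.inner analyticAt_id).pow 2)).sub
    ((hf.gradient.inner hf.gradient).mul (analyticAt_id.inner analyticAt_id))

theorem gradientConeTest_pos_iff {f : E → ℝ} {a : ℝ} {x : E} (hx : x ≠ 0) :
    0 < gradientConeTest f a x ↔ ‖∇ f x‖ ^ 2 < a * ⟪∇ f x, ‖x‖⁻¹ • x⟫ ^ 2 := by
  have hx' : ‖x‖ ≠ 0 := norm_ne_zero_iff.2 hx
  have h : gradientConeTest f a x = ‖x‖ ^ 2 * (a * ⟪∇ f x, ‖x‖⁻¹ • x⟫ ^ 2 - ‖∇ f x‖ ^ 2) := by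
    rw [gradientConeTest, inner_smul_right]
    field_simp
  rw [h, mul_pos_iff_of_pos_left (pow_pos (norm_pos_iff.2 hx) 2), sub_pos]

theorem not_eventually_mul_sq_inner_le_of_gradient_trajectory {f : E → ℝ} {γ : ℝ → E} {L m β a : ℝ}
    (ha : 1 < a) (hm : 1 < m) (hβ : 0 < β)
    (hdiff : ∀ᶠ s in 𝓝[<] L, DifferentiableAt ℝ f (γ s))
    (hode : ∀ᶠ s in 𝓝[<] L, HasDerivAt γ (‖∇ f (γ s)‖⁻¹ • ∇ f (γ s)) s)
    (hreg : ∀ᶠ s in 𝓝[<] L, ∇ f (γ s) ≠ 0) (hγ₀ : ∀ᶠ s in 𝓝[<] L, γ s ≠ 0)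
    (hf : Tendsto (fun s => f (γ s)) (𝓝[<] L) (𝓝 0)) (hγ : Tendsto γ (𝓝[<] L) (𝓝 0))
    (hKMP1 : (fun s => f (γ s) + β * ‖γ s‖ ^ m) =o[𝓝[<] L] fun s => ‖γ s‖ ^ m)
    (hKMP2 : (fun s => ⟪∇ f (γ s), ‖γ s‖⁻¹ • γ s⟫ + m * β * ‖γ s‖ ^ (m - 1))
      =o[𝓝[<] L] fun s => ‖γ s‖ ^ (m - 1)) :
    ¬ ∀ᶠ s in 𝓝[<] L, a * ⟪∇ f (γ s), ‖γ s‖⁻¹ • γ s⟫ ^ 2 ≤ ‖∇ f (γ s)‖ ^ 2 := by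
  have hm₀ : 0 < m := by linarith
  refine not_eventually_mul_sq_le_sq (φ := fun s => f (γ s)) (ψ := fun s => β * ‖γ s‖ ^ m)
    (v := fun s => ‖∇ f (γ s)‖) (p := fun s => ⟪∇ f (γ s), ‖γ s‖⁻¹ • γ s⟫)
    (k := fun s => m * β * ‖γ s‖ ^ (m - 1)) ha ?_ ?_
    (hreg.mono fun s => norm_pos_iff.2) (hγ₀.mono fun s hs => by positivity)
    (.of_forall fun s => by positivity) hf ?_
    (hKMP1.trans_isBigO (isBigO_self_const_mul hβ.ne' _ _))
    (hKMP2.trans_isBigO (isBigO_self_const_mul (by positivity) _ _))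
  · filter_upwards [hdiff, hode] with s hfs hγs
    simpa only [inner_inv_norm_smul_self] using hfs.hasGradientAt.comp_hasDerivAt hγs
  · filter_upwards [hode, hγ₀] with s hγs hs
    refine (((hγs.norm hs).rpow_const (p := m) (Or.inr hm.le)).const_mul β).congr_deriv ?_
    rw [real_inner_smul_left]
    ring
  · simpa [Real.zero_rpow hm₀.ne'] using
      ((hγ.norm.rpow_const (Or.inr hm₀.le)).const_mul β)

end InnerProductSpace

theorem gradient_asymptotically_radial_along_trajectory_general
    {n : ℕ}
    (U : Set (EuclideanSpace ℝ (Fin n)))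
    (hOU : (0 : EuclideanSpace ℝ (Fin n)) ∈ U)
    (f : EuclideanSpace ℝ (Fin n) → ℝ)
    (hfan : AnalyticOnNhd ℝ f U) (hf0 : f 0 = 0)
    (L : ℝ) (hL : 0 < L)
    (γ : ℝ → EuclideanSpace ℝ (Fin n))
    (hγU : ∀ s ∈ Set.Ico (0 : ℝ) L, γ s ∈ U)
    (hγreg : ∀ s ∈ Set.Ico (0 : ℝ) L, gradient f (γ s) ≠ 0)
    (hγode : ∀ s ∈ Set.Ico (0 : ℝ) L,
      HasDerivAt γ (‖gradient f (γ s)‖⁻¹ • gradient f (γ s)) s)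
    (hfmono : StrictMonoOn (fun s => f (γ s)) (Set.Ico (0 : ℝ) L))
    (hγlim : Tendsto γ (𝓝[<] L) (𝓝 0))
    (hosc : ∀ g : EuclideanSpace ℝ (Fin n) → ℝ, AnalyticAt ℝ g 0 →
      (∀ᶠ s in 𝓝[<] L, g (γ s) = 0) ∨ (∀ᶠ s in 𝓝[<] L, g (γ s) ≠ 0))
    (m : ℝ) (hm : 1 < m) (β : ℝ) (hβ : 0 < β)
    (hKMP1 : (fun s => f (γ s) + β * ‖γ s‖ ^ m) =o[𝓝[<] L] fun s => ‖γ s‖ ^ m)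
    (hKMP2 : (fun s => ⟪gradient f (γ s), ‖γ s‖⁻¹ • γ s⟫ + m * β * ‖γ s‖ ^ (m - 1))
      =o[𝓝[<] L] fun s => ‖γ s‖ ^ (m - 1))
    :
    (fun s => gradient f (γ s) + (m * β * ‖γ s‖ ^ (m - 1)) • (‖γ s‖⁻¹ • γ s))
      =o[𝓝[<] L] fun s => ‖γ s‖ ^ (m - 1) := by
  have hIco : Ico 0 L ∈ 𝓝[<] L := Ico_mem_nhdsLT hL
  have hfγ : Tendsto (fun s => f (γ s)) (𝓝[<] L) (𝓝 0) := by
    rw [← hf0]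
    exact (hfan 0 hOU).continuousAt.tendsto.comp hγlim
  have hγ₀ : ∀ᶠ s in 𝓝[<] L, γ s ≠ 0 := by
    filter_upwards [hIco] with s hs hγs
    simpa [hγs, hf0] using hfmono.lt_of_tendsto_nhdsLT hIco hfγ hs hs.2
  have hradial (a : ℝ) (ha : 1 < a) :
      ∀ᶠ s in 𝓝[<] L, ‖∇ f (γ s)‖ ^ 2 ≤ a * ⟪∇ f (γ s), ‖γ s‖⁻¹ • γ s⟫ ^ 2 := by
    have hnot := not_eventually_mul_sq_inner_le_of_gradient_trajectory ha hm hβ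
      (mem_of_superset hIco fun s hs => (hfan _ (hγU s hs)).differentiableAt)
      (mem_of_superset hIco hγode) (mem_of_superset hIco hγreg) hγ₀ hfγ hγlim hKMP1 hKMP2
    have hcone := eventually_pos_of_not_eventually_nonpos
      (hosc _ ((hfan 0 hOU).gradientConeTest a))
      (mem_of_superset hIco fun s hs =>
        ((hfan _ (hγU s hs)).gradientConeTest a).continuousAt.comp (hγode s hs).continuousAt)
      fun hnonpos => hnot <| by
        filter_upwards [hnonpos, hγ₀] with s hs h0
        exact not_lt.1 fun h => hs.not_gt ((gradientConeTest_pos_iff h0).2 h)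
    filter_upwards [hcone, hγ₀] with s hs h0
    exact ((gradientConeTest_pos_iff h0).1 hs).le
  have hunit : ∀ᶠ s in 𝓝[<] L, ‖‖γ s‖⁻¹ • γ s‖ = 1 := hγ₀.mono fun s => norm_smul_inv_norm
  have hmβ : m * β ≠ 0 := by positivity
  exact (isLittleO_add_smul_of_forall_sq_le hunit hradial
    (hKMP2.trans_isBigO (isBigO_self_const_mul hmβ _ _))).trans_isBigO
    (isBigO_const_mul_self _ _ _)

/-- along a non-oscillating trajectory the gradient is asymptotically radial:
`∇f(x) = -mβ|x|^{m-1}(x/|x|) + o(|x|^{m-1})`. -/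
theorem gradient_asymptotically_radial_along_trajectory
    {n : ℕ} (hn : 2 ≤ n)
    (U : Set (EuclideanSpace ℝ (Fin n))) (hUopen : IsOpen U)
    (hOU : (0 : EuclideanSpace ℝ (Fin n)) ∈ U)
    (f : EuclideanSpace ℝ (Fin n) → ℝ)
    (hfan : AnalyticOnNhd ℝ f U) (hf0 : f 0 = 0) (hgf0 : gradient f 0 = 0)
    (L : ℝ) (hL : 0 < L)
    (γ : ℝ → EuclideanSpace ℝ (Fin n))
    (hγU : ∀ s ∈ Set.Ico (0 : ℝ) L, γ s ∈ U)
    (hγreg : ∀ s ∈ Set.Ico (0 : ℝ) L, gradient f (γ s) ≠ 0)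
    (hγode : ∀ s ∈ Set.Ico (0 : ℝ) L,
      HasDerivAt γ (‖gradient f (γ s)‖⁻¹ • gradient f (γ s)) s)
    (hfneg : f (γ 0) < 0)
    (hfmono : StrictMonoOn (fun s => f (γ s)) (Set.Ico (0 : ℝ) L))
    (hγlim : Tendsto γ (𝓝[<] L) (𝓝 0))
    (hosc : ∀ g : EuclideanSpace ℝ (Fin n) → ℝ, AnalyticAt ℝ g 0 →
      (∀ᶠ s in 𝓝[<] L, g (γ s) = 0) ∨ (∀ᶠ s in 𝓝[<] L, g (γ s) ≠ 0))
    (m : ℝ) (hm : 1 < m) (hmQ : ∃ q : ℚ, m = (q : ℝ)) (β : ℝ) (hβ : 0 < β)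
    (hKMP1 : (fun s => f (γ s) + β * ‖γ s‖ ^ m) =o[𝓝[<] L] fun s => ‖γ s‖ ^ m)
    (hKMP2 : (fun s => ⟪gradient f (γ s), ‖γ s‖⁻¹ • γ s⟫ + m * β * ‖γ s‖ ^ (m - 1))
      =o[𝓝[<] L] fun s => ‖γ s‖ ^ (m - 1))
    :
    (fun s => gradient f (γ s) + (m * β * ‖γ s‖ ^ (m - 1)) • (‖γ s‖⁻¹ • γ s))
      =o[𝓝[<] L] fun s => ‖γ s‖ ^ (m - 1) :=
  gradient_asymptotically_radial_along_trajectory_general U hOU f hfan hf0 L hL γ hγU hγreg hγode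
    hfmono hγlim hosc m hm β hβ hKMP1 hKMP2
end
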